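/- Let n≥5, N≥2, and F,G : R^n×(R^N⊗S(n))→R^N Carathéodory maps. Suppose u↦F(·,D²u) is a bijection from W²ₚ,*(R^n)^N onto L²(R^n)^N with ν(F) := inf_{v≠w} ‖F(·,D²w)−F(·,D²v)‖_{L²}/‖D²w−D²v‖_{L²} > 0. If G(·,0)=0 and ν(F,G) := ess sup_x sup_{X≠Y} |(F(x,Y)−F(x,X))−(G(x,Y)−G(x,X))|/|Y−X| < ν(F), then for every g∈L²(R^n)^N the system G(·,D²u)=g a.e. on R^n has a unique solution u∈W²ₚ,*(R^n)^N. -/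

import Mathlib

open Finset MeasureTheory

noncomputable section

/-- Euclidean space `ℝ^n`. -/
abbrev Rn (n : ℕ) := EuclideanSpace ℝ (Fin n)

/-- Tensors in `ℝ^N ⊗ ℝ^{n×n}` (hessian-type arguments). -/
abbrev Tens (N n : ℕ) := Fin N → Fin n → Fin n → ℝ

/-- The contraction `A:Z ∈ ℝ^N`, `(A:Z)_α = A_{αβij} Z_{βij}`. -/
def contA {N n : ℕ} (A : Fin N → Fin N → Fin n → Fin n → ℝ) (Z : Tens N n) : Fin N → ℝ :=
  fun α => ∑ β, ∑ i, ∑ j, A α β i j * Z β i j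

/-- Squared Euclidean norm on `ℝ^N`. -/
def vnorm2 {N : ℕ} (v : Fin N → ℝ) : ℝ := ∑ α, (v α) ^ 2

/-- Squared Frobenius norm on tensors. -/
def tnorm2 {N n : ℕ} (Z : Tens N n) : ℝ := ∑ α, ∑ i, ∑ j, (Z α i j) ^ 2

/-- First partial derivative `D_i u_β`. -/
def D1 {n N : ℕ} (u : Rn n → Fin N → ℝ) (β : Fin N) (i : Fin n) (x : Rn n) : ℝ :=
  fderiv ℝ (fun y => u y β) x (EuclideanSpace.single i (1 : ℝ))

/-- Second partial derivative `D²_{ij} u_β`. -/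
def D2 {n N : ℕ} (u : Rn n → Fin N → ℝ) (β : Fin N) (i j : Fin n) (x : Rn n) : ℝ :=
  fderiv ℝ (fun y => D1 u β i y) x (EuclideanSpace.single j (1 : ℝ))

/-- The hessian tensor `D²u(x) ∈ ℝ^N ⊗ S(n)`. -/
def hess {n N : ℕ} (u : Rn n → Fin N → ℝ) (x : Rn n) : Tens N n := fun β i j => D2 u β i j x

/-- The Sobolev exponent `2* = 2n/(n−2)`. -/
def pStar (n : ℕ) : ENNReal := ENNReal.ofReal (2 * n / (n - 2 : ℝ))

/-- The iterated Sobolev exponent `2** = 2n/(n−4)`. -/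
def pStarStar (n : ℕ) : ENNReal := ENNReal.ofReal (2 * n / (n - 4 : ℝ))

/-- The `L^p(ℝ^n)` norm of a scalar function. -/
def LpN {n : ℕ} (p : ENNReal) (g : Rn n → ℝ) : ℝ := (eLpNorm g p volume).toReal

/-- Membership in the energy space
`W²,²_*(ℝ^n)^N = {u ∈ L^{2**} : Du ∈ L^{2*}, D²u ∈ L²}`, for twice (a.e.) differentiable
maps. -/
def W2StarMem {n N : ℕ} (u : Rn n → Fin N → ℝ) : Prop :=
  (∀ β, ∀ᵐ x : Rn n, DifferentiableAt ℝ (fun y => u y β) x) ∧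
  (∀ β i, ∀ᵐ x : Rn n, DifferentiableAt ℝ (D1 u β i) x) ∧
  MemLp (fun x => Real.sqrt (∑ β, (u x β) ^ 2)) (pStarStar n) volume ∧
  MemLp (fun x => Real.sqrt (∑ β, ∑ i, (D1 u β i x) ^ 2)) (pStar n) volume ∧
  MemLp (fun x => Real.sqrt (tnorm2 (hess u x))) 2 volume

/-- The `W²,²_*` norm `‖u‖_{L^{2**}} + ‖Du‖_{L^{2*}} + ‖D²u‖_{L²}`. -/
def W2StarNorm {n N : ℕ} (u : Rn n → Fin N → ℝ) : ℝ :=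
  LpN (pStarStar n) (fun x => Real.sqrt (∑ β, (u x β) ^ 2)) +
  LpN (pStar n) (fun x => Real.sqrt (∑ β, ∑ i, (D1 u β i x) ^ 2)) +
  LpN 2 (fun x => Real.sqrt (tnorm2 (hess u x)))

/-! Campanato's near-operator argument. For `u ∈ W²,²_*` let `A u` and `B u` be the classes of
`F(·, D²u)` and `G(·, D²u)` in `L²(ℝⁿ; ℝᴺ)`. The pointwise nearness of `F` and `G` together with
the lower bound `ν(F)` give
`‖(A w - B w) - (A v - B v)‖ ≤ (ν(F,G) / ν(F)) ‖A w - A v‖`.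
Since `A` is onto, `y ↦ y - B (S y) + g`, for a right inverse `S` of `A`, is then a contraction
of `L²`, and its fixed point `y` solves `B (S y) = g`. The same inequality shows that `B w = B v`
forces `A w = A v`, hence `w = v` a.e. by the injectivity of `A`. -/

open scoped NNReal

/-- Campanato's nearness of `B` to `A`, with the identity as the connecting operator `K`. -/
structure IsNear {W Y : Type*} [NormedAddCommGroup Y] (A B : W → Y) (α : ℝ≥0) : Prop where
  lt_one : α < 1
  norm_sub_sub_le : ∀ w v, ‖(A w - B w) - (A v - B v)‖ ≤ α * ‖A w - A v‖

namespace IsNear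

variable {W Y : Type*} [NormedAddCommGroup Y] {A B : W → Y} {α : ℝ≥0}

theorem apply_eq_of_apply_eq (h : IsNear A B α) {w v : W} (hB : B w = B v) : A w = A v := by
  have hle : ‖A w - A v‖ ≤ α * ‖A w - A v‖ := by
    simpa [hB] using h.norm_sub_sub_le w v
  have hα : (α : ℝ) < 1 := h.lt_one
  exact sub_eq_zero.1 (norm_le_zero_iff.1 (by nlinarith [norm_nonneg (A w - A v)]))

theorem surjective [CompleteSpace Y] (h : IsNear A B α) (hA : Function.Surjective A) :
    Function.Surjective B := by
  intro g
  choose S hS using hA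
  set T : Y → Y := fun y => y - B (S y) + g
  have hT : ContractingWith α T := by
    refine ⟨h.lt_one, LipschitzWith.of_dist_le_mul fun y y' => ?_⟩
    simpa [T, dist_eq_norm, hS, sub_sub_sub_cancel_right] using h.norm_sub_sub_le (S y) (S y')
  set y := ContractingWith.fixedPoint T hT
  have hfix : y - B (S y) + g - y = 0 := sub_eq_zero.2 (ContractingWith.fixedPoint_isFixedPt hT)
  refine ⟨S y, sub_eq_zero.1 ?_⟩
  rw [← neg_eq_zero, ← hfix]
  abel

end IsNear

section Caratheodory

variable {α ι β : Type*} [MeasurableSpace α] {μ : Measure α}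
  [TopologicalSpace ι] [TopologicalSpace.MetrizableSpace ι] [SecondCountableTopology ι]
  [MeasurableSpace ι] [OpensMeasurableSpace ι]
  [TopologicalSpace β] [TopologicalSpace.PseudoMetrizableSpace β] [MeasurableSpace β] [BorelSpace β]

theorem aemeasurable_apply_of_caratheodory [Nonempty β] {H : α → ι → β}
    (hmeas : ∀ X, Measurable fun x => H x X) (hcont : ∀ᵐ x ∂μ, Continuous (H x))
    {w : α → ι} (hw : Measurable w) : AEMeasurable (fun x => H x (w x)) μ := by
  classical
  set s := toMeasurable μ {x | ¬Continuous (H x)}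
  set H' : α → ι → β := fun x X => if x ∈ s then Classical.arbitrary β else H x X
  have hcont' : ∀ x, Continuous (H' x) := by
    intro x
    by_cases hx : x ∈ s
    · simp only [H', hx, if_true]
      exact continuous_const
    · simp only [H', hx, if_false]
      by_contra hc
      exact hx (subset_toMeasurable _ _ hc)
  have hmeas' : ∀ X, Measurable fun x => H' x X := fun X =>
    Measurable.ite (measurableSet_toMeasurable _ _) measurable_const (hmeas X)
  have huncurry : Measurable (Function.uncurry fun X x => H' x X) :=
    measurable_uncurry_of_continuous_of_measurable hcont' hmeas'
  refine ⟨fun x => H' x (w x), huncurry.comp (hw.prodMk measurable_id), ?_⟩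
  have hs : ∀ᵐ x ∂μ, x ∉ s := by
    have hs0 : μ s = 0 := by
      rw [measure_toMeasurable]
      exact hcont
    exact ae_iff.2 (by simpa using hs0)
  filter_upwards [hs] with x hx
  simp [H', hx]

end Caratheodory

section EuclideanNorms

variable {α : Type*} [MeasurableSpace α] {μ : Measure α} {N n : ℕ}

theorem norm_toLp_eq_sqrt_vnorm2 (v : Fin N → ℝ) :
    ‖(WithLp.toLp 2 v : EuclideanSpace ℝ (Fin N))‖ = √(vnorm2 v) := by
  simp [EuclideanSpace.norm_eq, vnorm2]

theorem sqrt_tnorm2_sub_le (Y X : Tens N n) : √(tnorm2 (Y - X)) ≤ √(tnorm2 Y) + √(tnorm2 X) := by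
  let e : Tens N n → EuclideanSpace ℝ (Fin N × Fin n × Fin n) := fun Z =>
    WithLp.toLp 2 fun p => Z p.1 p.2.1 p.2.2
  have he : ∀ Z, ‖e Z‖ = √(tnorm2 Z) := fun Z => by
    simp [e, EuclideanSpace.norm_eq, tnorm2, Fintype.sum_prod_type]
  have hsub : e (Y - X) = e Y - e X := rfl
  rw [← he, ← he, ← he, hsub]
  exact norm_sub_le _ _

theorem memLp_toLp_iff_memLp_sqrt_vnorm2 {p : ENNReal} {f : α → Fin N → ℝ}
    (hf : AEStronglyMeasurable (fun x => (WithLp.toLp 2 (f x) : EuclideanSpace ℝ (Fin N))) μ) :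
    MemLp (fun x => (WithLp.toLp 2 (f x) : EuclideanSpace ℝ (Fin N))) p μ ↔
      MemLp (fun x => √(vnorm2 (f x))) p μ := by
  rw [← memLp_norm_iff hf]
  simp only [norm_toLp_eq_sqrt_vnorm2]

end EuclideanNorms

section Hessian

variable {n N : ℕ}

theorem measurable_hess (u : Rn n → Fin N → ℝ) : Measurable (hess u) := by
  unfold hess D2
  fun_prop

theorem D1_zero (β : Fin N) (i : Fin n) : D1 (0 : Rn n → Fin N → ℝ) β i = 0 := by
  ext y
  simp [D1]

theorem hess_zero : hess (0 : Rn n → Fin N → ℝ) = 0 := by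
  ext x β i j
  simp [hess, D2, D1_zero]

theorem w2StarMem_zero : W2StarMem (0 : Rn n → Fin N → ℝ) := by
  refine ⟨fun β => ae_of_all _ fun x => differentiableAt_const _,
    fun β i => ae_of_all _ fun x => by simp [D1_zero], ?_, ?_, ?_⟩ <;>
    simp [D1_zero, hess_zero, tnorm2]

theorem LpN_le_mul_of_ae_le {p : ENNReal} {f t : Rn n → ℝ} {c : ℝ} (hc : 0 ≤ c)
    (ht : MemLp t p volume) (h : ∀ᵐ x, ‖f x‖ ≤ c * t x) : LpN p f ≤ c * LpN p t := by
  have hle : eLpNorm f p volume ≤ ENNReal.ofReal c * eLpNorm t p volume := by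
    refine eLpNorm_le_mul_eLpNorm_of_ae_le_mul ?_ p
    filter_upwards [h] with x hx
    exact hx.trans (mul_le_mul_of_nonneg_left (Real.le_norm_self _) hc)
  have h2 := ENNReal.toReal_mono (ENNReal.mul_ne_top ENNReal.ofReal_ne_top ht.eLpNorm_ne_top) hle
  rwa [ENNReal.toReal_mul, ENNReal.toReal_ofReal hc] at h2

theorem norm_eq_LpN_of_ae_eq {f : Lp (EuclideanSpace ℝ (Fin N)) 2 (volume : Measure (Rn n))}
    {g : Rn n → Fin N → ℝ} (h : ∀ᵐ x, f x = WithLp.toLp 2 (g x)) :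
    ‖f‖ = LpN 2 (fun x => √(vnorm2 (g x))) := by
  rw [Lp.norm_def, LpN]
  congr 1
  refine eLpNorm_congr_norm_ae ?_
  filter_upwards [h] with x hx
  rw [hx, norm_toLp_eq_sqrt_vnorm2, Real.norm_of_nonneg (Real.sqrt_nonneg _)]

theorem memLp_sqrt_tnorm2_hess_sub {w v : Rn n → Fin N → ℝ} (hw : W2StarMem w)
    (hv : W2StarMem v) : MemLp (fun x => √(tnorm2 (hess w x - hess v x))) 2 volume := by
  have hcont : Continuous fun Z : Tens N n => √(tnorm2 Z) := by
    unfold tnorm2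
    fun_prop
  refine (hw.2.2.2.2.add hv.2.2.2.2).of_le ?_ (ae_of_all _ fun x => ?_)
  · exact (hcont.measurable.comp ((measurable_hess w).sub (measurable_hess v))).aestronglyMeasurable
  · rw [Real.norm_of_nonneg (Real.sqrt_nonneg _)]
    exact (sqrt_tnorm2_sub_le _ _).trans (Real.le_norm_self _)

end Hessian

section Superposition

variable {n N : ℕ}

def superposition (H : Rn n → Tens N n → Fin N → ℝ) (u : Rn n → Fin N → ℝ) (x : Rn n) :
    EuclideanSpace ℝ (Fin N) :=
  WithLp.toLp 2 (H x (hess u x))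

variable {F G H : Rn n → Tens N n → Fin N → ℝ}

theorem aestronglyMeasurable_superposition (hmeas : ∀ X, Measurable fun x => H x X)
    (hcont : ∀ᵐ x : Rn n, Continuous fun X => H x X) (u : Rn n → Fin N → ℝ) :
    AEStronglyMeasurable (superposition H u) volume :=
  ((PiLp.continuous_toLp 2 _).measurable.comp_aemeasurable
    (aemeasurable_apply_of_caratheodory hmeas hcont (measurable_hess u))).aestronglyMeasurable

theorem memLp_superposition_of_near {c : ℝ} {u : Rn n → Fin N → ℝ} (hu : W2StarMem u)
    (hF : MemLp (superposition F u) 2 volume) (hF0 : MemLp (superposition F 0) 2 volume)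
    (hG : AEStronglyMeasurable (superposition G u) volume) (hG0 : ∀ᵐ x : Rn n, ∀ γ, G x 0 γ = 0)
    (hnear : ∀ᵐ x : Rn n, ∀ X Y : Tens N n,
      √(vnorm2 (fun γ => (F x Y γ - F x X γ) - (G x Y γ - G x X γ))) ≤ c * √(tnorm2 (Y - X))) :
    MemLp (superposition G u) 2 volume := by
  refine ((hF.norm.add hF0.norm).add (hu.2.2.2.2.const_mul c)).of_le hG ?_
  filter_upwards [hnear, hG0] with x hx hx0
  set Y := hess u x
  have hsplit : superposition G u x = superposition F u x - superposition F 0 x -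
      WithLp.toLp 2 (fun γ => (F x Y γ - F x 0 γ) - (G x Y γ - G x 0 γ)) := by
    ext γ
    simp [superposition, hess_zero, hx0, Y]
  refine le_trans ?_ (Real.le_norm_self _)
  calc ‖superposition G u x‖
      ≤ ‖superposition F u x‖ + ‖superposition F 0 x‖ +
          ‖WithLp.toLp 2 (fun γ => (F x Y γ - F x 0 γ) - (G x Y γ - G x 0 γ))‖ := by
        rw [hsplit]
        exact (norm_sub_le _ _).trans (by gcongr; exact norm_sub_le _ _)
    _ ≤ ‖superposition F u x‖ + ‖superposition F 0 x‖ + c * √(tnorm2 Y) := by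
        gcongr
        rw [norm_toLp_eq_sqrt_vnorm2]
        simpa using hx 0 Y

end Superposition

section SuperpositionLp

variable {n N : ℕ} {F G H : Rn n → Tens N n → Fin N → ℝ}

def superpositionLp (H : Rn n → Tens N n → Fin N → ℝ)
    (hH : ∀ u, W2StarMem u → MemLp (superposition H u) 2 volume)
    (u : {u : Rn n → Fin N → ℝ // W2StarMem u}) :
    Lp (EuclideanSpace ℝ (Fin N)) 2 (volume : Measure (Rn n)) :=
  (hH u.1 u.2).toLp

variable {hF : ∀ u, W2StarMem u → MemLp (superposition F u) 2 volume}
  {hG : ∀ u, W2StarMem u → MemLp (superposition G u) 2 volume}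
  {hH : ∀ u, W2StarMem u → MemLp (superposition H u) 2 volume}

theorem superpositionLp_eq_iff {w v : {u : Rn n → Fin N → ℝ // W2StarMem u}} :
    superpositionLp F hF w = superpositionLp G hG v ↔
      ∀ᵐ x : Rn n, ∀ γ, F x (hess w.1 x) γ = G x (hess v.1 x) γ := by
  rw [superpositionLp, superpositionLp, MemLp.toLp_eq_toLp_iff]
  simp [Filter.EventuallyEq, superposition, funext_iff]

theorem norm_superpositionLp_sub (w v : {u : Rn n → Fin N → ℝ // W2StarMem u}) :
    ‖superpositionLp F hF w - superpositionLp F hF v‖ =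
      LpN 2 (fun x => √(vnorm2 (fun γ => F x (hess w.1 x) γ - F x (hess v.1 x) γ))) := by
  refine norm_eq_LpN_of_ae_eq ?_
  filter_upwards [Lp.coeFn_sub (superpositionLp F hF w) (superpositionLp F hF v),
    MemLp.coeFn_toLp (hF w.1 w.2), MemLp.coeFn_toLp (hF v.1 v.2)] with x h h₁ h₂
  rw [h, Pi.sub_apply, superpositionLp, superpositionLp, h₁, h₂]
  rfl

theorem norm_superpositionLp_sub_sub (w v : {u : Rn n → Fin N → ℝ // W2StarMem u}) :
    ‖(superpositionLp F hF w - superpositionLp G hG w) -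
        (superpositionLp F hF v - superpositionLp G hG v)‖ =
      LpN 2 (fun x => √(vnorm2 (fun γ =>
        (F x (hess w.1 x) γ - F x (hess v.1 x) γ) -
          (G x (hess w.1 x) γ - G x (hess v.1 x) γ)))) := by
  refine norm_eq_LpN_of_ae_eq ?_
  filter_upwards [Lp.coeFn_sub (superpositionLp F hF w - superpositionLp G hG w)
      (superpositionLp F hF v - superpositionLp G hG v),
    Lp.coeFn_sub (superpositionLp F hF w) (superpositionLp G hG w),
    Lp.coeFn_sub (superpositionLp F hF v) (superpositionLp G hG v),
    MemLp.coeFn_toLp (hF w.1 w.2), MemLp.coeFn_toLp (hF v.1 v.2),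
    MemLp.coeFn_toLp (hG w.1 w.2), MemLp.coeFn_toLp (hG v.1 v.2)] with x h hw hv h₁ h₂ h₃ h₄
  rw [h, Pi.sub_apply, hw, hv, Pi.sub_apply, Pi.sub_apply]
  simp only [superpositionLp, h₁, h₂, h₃, h₄]
  ext γ
  simp only [superposition, PiLp.sub_apply]
  ring

theorem superpositionLp_surjective
    (hsolv : ∀ f : Rn n → Fin N → ℝ, MemLp (fun x => √(vnorm2 (f x))) 2 volume →
      ∃ u, W2StarMem u ∧ ∀ᵐ x : Rn n, ∀ γ, H x (hess u x) γ = f x γ) :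
    Function.Surjective (superpositionLp H hH) := by
  intro y
  have hy : MemLp (fun x => √(vnorm2 (WithLp.ofLp (y x)))) 2 volume :=
    (memLp_toLp_iff_memLp_sqrt_vnorm2 (by simpa using Lp.aestronglyMeasurable y)).1
      (by simpa using Lp.memLp y)
  obtain ⟨u, hu, hHu⟩ := hsolv _ hy
  refine ⟨⟨u, hu⟩, Lp.ext ?_⟩
  filter_upwards [MemLp.coeFn_toLp (hH u hu), hHu] with x h₁ h₂
  rw [superpositionLp, h₁, superposition, funext h₂, WithLp.toLp_ofLp]

end SuperpositionLp

theorem isNear_superpositionLp {n N : ℕ} {F G : Rn n → Tens N n → Fin N → ℝ}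
    {hF : ∀ u, W2StarMem u → MemLp (superposition F u) 2 volume}
    {hG : ∀ u, W2StarMem u → MemLp (superposition G u) 2 volume} {νF c : ℝ}
    (hνF : 0 < νF) (hc : 0 ≤ c) (hcν : c < νF)
    (hlower : ∀ w v : Rn n → Fin N → ℝ, W2StarMem w → W2StarMem v →
      LpN 2 (fun x => √(vnorm2 (fun γ => F x (hess w x) γ - F x (hess v x) γ))) ≥
        νF * LpN 2 (fun x => √(tnorm2 (hess w x - hess v x))))
    (hnear : ∀ᵐ x : Rn n, ∀ X Y : Tens N n,
      √(vnorm2 (fun γ => (F x Y γ - F x X γ) - (G x Y γ - G x X γ))) ≤ c * √(tnorm2 (Y - X))) :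
    IsNear (superpositionLp F hF) (superpositionLp G hG) (c / νF).toNNReal := by
  refine ⟨Real.toNNReal_lt_one.2 ((div_lt_one hνF).2 hcν), ?_⟩
  rintro ⟨w, hw⟩ ⟨v, hv⟩
  rw [norm_superpositionLp_sub_sub, norm_superpositionLp_sub,
    Real.coe_toNNReal _ (div_nonneg hc hνF.le)]
  have hT := hlower w v hw hv
  calc _ ≤ c * LpN 2 (fun x => √(tnorm2 (hess w x - hess v x))) := by
        refine LpN_le_mul_of_ae_le hc (memLp_sqrt_tnorm2_hess_sub hw hv) ?_
        filter_upwards [hnear] with x hx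
        rw [Real.norm_of_nonneg (Real.sqrt_nonneg _)]
        exact hx _ _
    _ ≤ c / νF * LpN 2 (fun x => √(vnorm2 (fun γ => F x (hess w x) γ - F x (hess v x) γ))) := by
        rw [div_mul_eq_mul_div, le_div_iff₀ hνF, mul_assoc]
        gcongr
        linarith

theorem stmt19_general {n N : ℕ}
    (F G : Rn n → Tens N n → Fin N → ℝ)
    (hFmeas : ∀ X : Tens N n, Measurable fun x => F x X)
    (hFcont : ∀ᵐ x : Rn n, Continuous fun X => F x X)
    (hGmeas : ∀ X : Tens N n, Measurable fun x => G x X)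
    (hGcont : ∀ᵐ x : Rn n, Continuous fun X => G x X)
    (hFbij : ∀ f : Rn n → Fin N → ℝ,
      MemLp (fun x => Real.sqrt (vnorm2 (f x))) 2 volume →
      ∃ u : Rn n → Fin N → ℝ, W2StarMem u ∧
        (∀ᵐ x : Rn n, ∀ γ, F x (hess u x) γ = f x γ) ∧
        (∀ v : Rn n → Fin N → ℝ, W2StarMem v →
          (∀ᵐ x : Rn n, ∀ γ, F x (hess v x) γ = f x γ) →
            ∀ᵐ x : Rn n, v x = u x))
    (hFrange : ∀ u : Rn n → Fin N → ℝ, W2StarMem u →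
      MemLp (fun x => Real.sqrt (vnorm2 (fun γ => F x (hess u x) γ))) 2 volume)
    (νF : ℝ) (hνF : 0 < νF)
    (hlower : ∀ w v : Rn n → Fin N → ℝ, W2StarMem w → W2StarMem v →
      LpN 2 (fun x => Real.sqrt (vnorm2 (fun γ => F x (hess w x) γ - F x (hess v x) γ))) ≥
        νF * LpN 2 (fun x => Real.sqrt (tnorm2 (hess w x - hess v x))))
    (hG0 : ∀ᵐ x : Rn n, ∀ γ, G x 0 γ = 0)
    (νFG : ℝ) (hνFG : νFG < νF)
    (hnear : ∀ᵐ x : Rn n, ∀ X Y : Tens N n,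
      Real.sqrt (vnorm2 (fun γ =>
          (F x Y γ - F x X γ) - (G x Y γ - G x X γ))) ≤
        νFG * Real.sqrt (tnorm2 (Y - X))) :
    ∀ g : Rn n → Fin N → ℝ,
      MemLp (fun x => Real.sqrt (vnorm2 (g x))) 2 volume →
      ∃ u : Rn n → Fin N → ℝ, W2StarMem u ∧
        (∀ᵐ x : Rn n, ∀ γ, G x (hess u x) γ = g x γ) ∧
        (∀ v : Rn n → Fin N → ℝ, W2StarMem v →
          (∀ᵐ x : Rn n, ∀ γ, G x (hess v x) γ = g x γ) →
            ∀ᵐ x : Rn n, v x = u x) := by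
  have hnear' : ∀ᵐ x : Rn n, ∀ X Y : Tens N n,
      √(vnorm2 (fun γ => (F x Y γ - F x X γ) - (G x Y γ - G x X γ))) ≤
        max νFG 0 * √(tnorm2 (Y - X)) := by
    filter_upwards [hnear] with x hx X Y
    exact (hx X Y).trans (by gcongr; exact le_max_left _ _)
  have hF : ∀ u, W2StarMem u → MemLp (superposition F u) 2 volume := fun u hu =>
    (memLp_toLp_iff_memLp_sqrt_vnorm2 (aestronglyMeasurable_superposition hFmeas hFcont u)).2
      (hFrange u hu)
  have hG : ∀ u, W2StarMem u → MemLp (superposition G u) 2 volume := fun u hu =>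
    memLp_superposition_of_near hu (hF u hu) (hF 0 w2StarMem_zero)
      (aestronglyMeasurable_superposition hGmeas hGcont u) hG0 hnear'
  have hnearOp : IsNear (superpositionLp F hF) (superpositionLp G hG) _ :=
    isNear_superpositionLp hνF (le_max_right _ _) (max_lt hνFG hνF) hlower hnear'
  have hGsurj := hnearOp.surjective (superpositionLp_surjective fun f hf =>
    (hFbij f hf).imp fun _ hu => ⟨hu.1, hu.2.1⟩)
  intro g hg
  obtain ⟨u₀, hu₀, hFu₀, -⟩ := hFbij g hg
  obtain ⟨⟨u, hu⟩, hGu⟩ := hGsurj (superpositionLp F hF ⟨u₀, hu₀⟩)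
  have hGug : ∀ᵐ x : Rn n, ∀ γ, G x (hess u x) γ = g x γ := by
    filter_upwards [superpositionLp_eq_iff.1 hGu, hFu₀] with x h₁ h₂ γ
    rw [h₁, h₂]
  refine ⟨u, hu, hGug, fun v hv hGvg => ?_⟩
  have hGv : superpositionLp G hG ⟨v, hv⟩ = superpositionLp G hG ⟨u, hu⟩ := by
    refine superpositionLp_eq_iff.2 ?_
    filter_upwards [hGvg, hGug] with x h₁ h₂ γ
    rw [h₁, h₂]
  obtain ⟨u', -, -, huniq⟩ := hFbij _ (hFrange u hu)
  filter_upwards [huniq v hv (superpositionLp_eq_iff.1 (hnearOp.apply_eq_of_apply_eq hGv)),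
    huniq u hu (ae_of_all _ fun _ _ => rfl)] with x h₁ h₂
  rw [h₁, h₂]

/-- stability of strong global solutions: let `n ≥ 5`, `N ≥ 2` and let
`F, G` be Carathéodory maps. Suppose `u ↦ F(·,D²u)` is a bijection from `W²,²_*(ℝ^n)^N`
onto `L²(ℝ^n)^N` (solvability, uniquely up to a.e. equality) and
`ν(F) ≥ ν_F > 0` in the sense that
`‖F(·,D²w)−F(·,D²v)‖_{L²} ≥ ν_F ‖D²w−D²v‖_{L²}` for all `w, v`. If `G(·,0) = 0` and the
nearness modulus satisfies `ν(F,G) ≤ ν_{FG} < ν_F`, i.e.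
`|(F(x,Y)−F(x,X)) − (G(x,Y)−G(x,X))| ≤ ν_{FG}|Y−X|` for a.e. `x` and all `X, Y`, then for
every `g ∈ L²(ℝ^n)^N` the system `G(·,D²u) = g` a.e. on `ℝ^n` has a solution
`u ∈ W²,²_*(ℝ^n)^N`, unique up to a.e. equality. -/
theorem stmt19 {n N : ℕ} (hn : 5 ≤ n) (hN : 2 ≤ N)
    (F G : Rn n → Tens N n → Fin N → ℝ)
    (hFmeas : ∀ X : Tens N n, Measurable fun x => F x X)
    (hFcont : ∀ᵐ x : Rn n, Continuous fun X => F x X)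
    (hGmeas : ∀ X : Tens N n, Measurable fun x => G x X)
    (hGcont : ∀ᵐ x : Rn n, Continuous fun X => G x X)
    (hFbij : ∀ f : Rn n → Fin N → ℝ,
      MemLp (fun x => Real.sqrt (vnorm2 (f x))) 2 volume →
      ∃ u : Rn n → Fin N → ℝ, W2StarMem u ∧
        (∀ᵐ x : Rn n, ∀ γ, F x (hess u x) γ = f x γ) ∧
        (∀ v : Rn n → Fin N → ℝ, W2StarMem v →
          (∀ᵐ x : Rn n, ∀ γ, F x (hess v x) γ = f x γ) →
            ∀ᵐ x : Rn n, v x = u x))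
    (hFrange : ∀ u : Rn n → Fin N → ℝ, W2StarMem u →
      MemLp (fun x => Real.sqrt (vnorm2 (fun γ => F x (hess u x) γ))) 2 volume)
    (νF : ℝ) (hνF : 0 < νF)
    (hlower : ∀ w v : Rn n → Fin N → ℝ, W2StarMem w → W2StarMem v →
      LpN 2 (fun x => Real.sqrt (vnorm2 (fun γ => F x (hess w x) γ - F x (hess v x) γ))) ≥
        νF * LpN 2 (fun x => Real.sqrt (tnorm2 (hess w x - hess v x))))
    (hG0 : ∀ᵐ x : Rn n, ∀ γ, G x 0 γ = 0)
    (νFG : ℝ) (hνFG : νFG < νF)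
    (hnear : ∀ᵐ x : Rn n, ∀ X Y : Tens N n,
      Real.sqrt (vnorm2 (fun γ =>
          (F x Y γ - F x X γ) - (G x Y γ - G x X γ))) ≤
        νFG * Real.sqrt (tnorm2 (Y - X))) :
    ∀ g : Rn n → Fin N → ℝ,
      MemLp (fun x => Real.sqrt (vnorm2 (g x))) 2 volume →
      ∃ u : Rn n → Fin N → ℝ, W2StarMem u ∧
        (∀ᵐ x : Rn n, ∀ γ, G x (hess u x) γ = g x γ) ∧
        (∀ v : Rn n → Fin N → ℝ, W2StarMem v →
          (∀ᵐ x : Rn n, ∀ γ, G x (hess v x) γ = g x γ) →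
            ∀ᵐ x : Rn n, v x = u x) :=
  stmt19_general F G hFmeas hFcont hGmeas hGcont hFbij hFrange νF hνF hlower hG0 νFG hνFG hnear
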